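/- arXiv:1910.07653 — 3 statements merged into one kernel-verified Lean document; each statement's English description precedes it below -/
import Mathlib

section
/- Let J and J' be two disjoint intervals in [0,1] with centers c and c' and lengths r and r'. Then the interaction energy of the normalized uniform measures satisfies I(μ_J, μ_{J'}) < (−log|c−c'|) + 2. -/
/-!
With `u < v` the endpoints of `J - d` for a point `d` outside `J`, the average of `-log |x - d|`
over `J` is `1 - (v log v - u log u) / (v - u)`, while `v log v - u log u > (v - u) log m` for the
midpoint `m` of `u, v` by monotonicity of `log`. So averaging over `J` adds less than `1` to the
value at the centre; doing this once in each variable gives the bound `-log |c - c'| + 2`. Since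
`|x - y| ≤ 1` on `[0, 1]`, the inner integrals are nonnegative, which lets the pointwise bound
pass through the outer integral.
-/

open MeasureTheory Set Real

theorem sub_mul_log_midpoint_lt_of_nonneg {u v : ℝ} (hu : 0 ≤ u) (huv : u < v) :
    (v - u) * log ((u + v) / 2) < v * log v - u * log u := by
  have hm : 0 < (u + v) / 2 := by linarith
  have hv : 0 < v * (log v - log ((u + v) / 2)) :=
    mul_pos (by linarith) (sub_pos.2 (log_lt_log hm (by linarith)))
  have hu' : 0 ≤ u * (log ((u + v) / 2) - log u) := by
    rcases hu.eq_or_lt with rfl | hu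
    · simp
    · exact mul_nonneg hu.le (sub_nonneg.2 (log_le_log hu (by linarith)))
  linear_combination hv + hu'

theorem sub_mul_log_midpoint_lt {u v : ℝ} (huv : u < v) (h0 : 0 ≤ u ∨ v ≤ 0) :
    (v - u) * log ((u + v) / 2) < v * log v - u * log u := by
  rcases h0 with hu | hv
  · exact sub_mul_log_midpoint_lt_of_nonneg hu huv
  · have hneg := sub_mul_log_midpoint_lt_of_nonneg (neg_nonneg.2 hv) (neg_lt_neg huv)
    rw [← neg_add, neg_div, log_neg_eq_log, log_neg_eq_log, log_neg_eq_log, add_comm] at hneg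
    linarith

theorem integral_neg_log_abs_sub (a b d : ℝ) :
    ∫ x in a..b, -log |x - d| = (a - d) * log (a - d) - (b - d) * log (b - d) + (b - a) := by
  simp only [log_abs]
  rw [intervalIntegral.integral_neg, intervalIntegral.integral_comp_sub_right (fun x => log x),
    integral_log]
  ring

theorem integral_neg_log_abs_sub_lt {a b d : ℝ} (hab : a < b) (hd : d ∉ Ioo a b) :
    ∫ x in a..b, -log |x - d| < (b - a) * (-log |(a + b) / 2 - d| + 1) := by
  have h0 : 0 ≤ a - d ∨ b - d ≤ 0 := by
    by_contra! h
    exact hd ⟨by linarith [h.1], by linarith [h.2]⟩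
  have key := sub_mul_log_midpoint_lt (sub_lt_sub_right hab d) h0
  rw [integral_neg_log_abs_sub, log_abs, show (a + b) / 2 - d = (a - d + (b - d)) / 2 by ring]
  linarith

theorem setIntegral_Ioo_neg_log_abs_sub_lt {c r d : ℝ} (hr : 0 < r)
    (hd : d ∉ Ioo (c - r / 2) (c + r / 2)) :
    ∫ x in Ioo (c - r / 2) (c + r / 2), -log |x - d| < r * (-log |c - d| + 1) := by
  rw [← integral_Ioc_eq_integral_Ioo, ← intervalIntegral.integral_of_le (by linarith)]
  have key := integral_neg_log_abs_sub_lt (by linarith) hd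
  rwa [show c + r / 2 - (c - r / 2) = r by ring, show (c - r / 2 + (c + r / 2)) / 2 = c by ring]
    at key

theorem integrableOn_Ioo_neg_log_abs_sub (a b d : ℝ) :
    IntegrableOn (fun x => -log |x - d|) (Ioo a b) := by
  simp only [log_abs]
  have h := (intervalIntegral.intervalIntegrable_log' (a := a - d) (b := b - d)).comp_sub_right d
  rw [sub_add_cancel, sub_add_cancel] at h
  exact h.def'.neg.mono_set (Ioo_subset_Ioc_self.trans Ioc_subset_uIoc)

/-- For two disjoint intervals `J = (c - r/2, c + r/2)` and
`J' = (c' - r'/2, c' + r'/2)` contained in `[0,1]`, the interaction energy of the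
normalized uniform measures satisfies `I(μ_J, μ_{J'}) < -log |c - c'| + 2`. -/
theorem interaction_energy_upper_bound (c c' r r' : ℝ) (hr : 0 < r) (hr' : 0 < r')
    (hJ : Set.Ioo (c - r / 2) (c + r / 2) ⊆ Set.Icc (0 : ℝ) 1)
    (hJ' : Set.Ioo (c' - r' / 2) (c' + r' / 2) ⊆ Set.Icc (0 : ℝ) 1)
    (hdisj : Disjoint (Set.Ioo (c - r / 2) (c + r / 2)) (Set.Ioo (c' - r' / 2) (c' + r' / 2))) :
    (1 / (r * r')) *
        ∫ x in Set.Ioo (c - r / 2) (c + r / 2),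
          ∫ y in Set.Ioo (c' - r' / 2) (c' + r' / 2), -Real.log |x - y| <
      -Real.log |c - c'| + 2 := by
  set J := Ioo (c - r / 2) (c + r / 2)
  set J' := Ioo (c' - r' / 2) (c' + r' / 2)
  have hc'J : c' ∉ J := fun h => disjoint_left.1 hdisj h ⟨by linarith, by linarith⟩
  have inner_nonneg : ∀ x ∈ J, 0 ≤ ∫ y in J', -log |x - y| := fun x hx =>
    setIntegral_nonneg measurableSet_Ioo fun y hy => neg_nonneg.2 <| log_nonpos (abs_nonneg _) <|
      abs_sub_le_of_nonneg_of_le (hJ hx).1 (hJ hx).2 (hJ' hy).1 (hJ' hy).2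
  have inner_le : ∀ x ∈ J, ∫ y in J', -log |x - y| ≤ r' * (-log |x - c'| + 1) := by
    intro x hx
    simpa only [abs_sub_comm _ x] using
      (setIntegral_Ioo_neg_log_abs_sub_lt hr' (disjoint_left.1 hdisj hx)).le
  have hint : IntegrableOn (fun x => -log |x - c'|) J := integrableOn_Ioo_neg_log_abs_sub _ _ _
  have hone : IntegrableOn (fun _ => (1 : ℝ)) J := integrableOn_const measure_Ioo_lt_top.ne
  calc (1 / (r * r')) * ∫ x in J, ∫ y in J', -log |x - y|
      ≤ (1 / (r * r')) * ∫ x in J, r' * (-log |x - c'| + 1) := by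
        refine mul_le_mul_of_nonneg_left ?_ (by positivity)
        exact integral_mono_of_nonneg (ae_restrict_of_forall_mem measurableSet_Ioo inner_nonneg)
          ((hint.add hone).const_mul r') (ae_restrict_of_forall_mem measurableSet_Ioo inner_le)
    _ = (1 / (r * r')) * (r' * ((∫ x in J, -log |x - c'|) + r)) := by
        rw [integral_const_mul, integral_add hint hone, setIntegral_const,
          volume_real_Ioo_of_le (by linarith), smul_eq_mul, mul_one]
        ring
    _ < (1 / (r * r')) * (r' * (r * (-log |c - c'| + 1) + r)) := by
        gcongr
        exact setIntegral_Ioo_neg_log_abs_sub_lt hr hc'J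
    _ = -log |c - c'| + 2 := by
        field_simp
        ring
end

section
/- The double integral ∬_{[0,1]×[0,1]} (−log|x−y|) dx dy equals 3/2. -/
open MeasureTheory Set

/-!
After the substitution `u = x - y` the inner integral is `∫ log u` over `[x - 1, x]`, which
evaluates to `1 - x log x + (x - 1) log (x - 1)`. Integrating in `x`, both `t log t` terms
contribute `1/4` (primitive `t² log t / 2 - t² / 4`), giving `1 + 1/4 + 1/4 = 3/2`.
-/

open Real

theorem integral_mul_log_from_zero (b : ℝ) :
    ∫ x in 0..b, x * log x = b ^ 2 * log b / 2 - b ^ 2 / 4 := by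
  have hderiv : ∀ x ≠ 0,
      HasDerivAt (fun x => x * (x * log x) / 2 - x ^ 2 / 4) (x * log x) x := by
    intro x hx
    refine ((((hasDerivAt_id' x).mul (hasDerivAt_mul_log hx)).div_const 2).sub
      ((hasDerivAt_pow 2 x).div_const 4)).congr_deriv ?_
    push_cast
    ring
  rw [intervalIntegral.integral_eq_sub_of_hasDeriv_right
    (f := fun x => x * (x * log x) / 2 - x ^ 2 / 4) (by fun_prop)
    (fun x hx => (hderiv x ?_).hasDerivWithinAt)
    (continuous_mul_log.intervalIntegrable 0 b)]
  · ring
  · rintro rfl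
    rcases le_total 0 b with h | h <;> simp [h] at hx

theorem integral_log_abs_sub (a b x : ℝ) :
    ∫ y in a..b, log |x - y| = (x - a) * log (x - a) - (x - b) * log (x - b) + a - b := by
  simp only [log_abs, intervalIntegral.integral_comp_sub_left (fun u => log u), integral_log]
  ring

/-- The Coulomb energy of Lebesgue measure on the unit interval:
`∬_{[0,1]×[0,1]} (-log |x - y|) dx dy = 3/2`. -/
theorem energy_lebesgue_unit_interval :
    (∫ x in Set.Icc (0 : ℝ) 1, ∫ y in Set.Icc (0 : ℝ) 1, -Real.log |x - y|) = 3 / 2 := by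
  simp_rw [integral_Icc_eq_integral_Ioc, ← intervalIntegral.integral_of_le zero_le_one,
    intervalIntegral.integral_neg, integral_log_abs_sub, sub_zero, add_zero]
  have hx : ∫ x in (0 : ℝ)..1, x * log x = -1 / 4 := by
    norm_num [integral_mul_log_from_zero]
  have hx_sub_one : ∫ x in (0 : ℝ)..1, (x - 1) * log (x - 1) = 1 / 4 := by
    rw [intervalIntegral.integral_comp_sub_right (fun x => x * log x),
      intervalIntegral.integral_symm]
    norm_num [integral_mul_log_from_zero]
  rw [intervalIntegral.integral_sub _ intervalIntegrable_const, intervalIntegral.integral_sub,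
    hx, hx_sub_one]
  · norm_num
  all_goals exact Continuous.intervalIntegrable (by fun_prop) 0 1
end

section
/- Define n₁ = 2^10 and n_k = 2^{n_{k−1}+1}, r_n = 2^{−n}, and V_n = ⋃_{j=0}^{n−1} J_{j,n} with intervals of length r_n centered at (2j+1)/(2n). Let X_k = [0,1] \ ⋃_{i=1}^{k−1} V_{n_i}. Then Leb(V_{n_k} ∩ X_k) = Leb(X_k) · Leb(V_{n_k}). -/
/-!
Write `n = n_k`. Every earlier `n_i` is a power of two with `2 ^ (n_i + 1) ∣ n`, so every
interval of `V_{n_i}` has both endpoints in `(1/n) ℤ`. Hence each cell `(a/n, (a+1)/n)` of the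
grid of mesh `1/n` lies either inside `X_k` or outside it, and `X_k` agrees with a union of such
cells up to the finitely many grid points. On every cell `V_n` has the same measure `2^{-n}`,
i.e. the fraction `Leb(V_n)` of the cell, and summing over the cells of `X_k` gives the claim.
-/

open MeasureTheory Set

/-- The tower sequence `n₁ = 2^10`, `n_{k+1} = 2^{n_k + 1}` (indexed from 0). -/
def towerSeq : ℕ → ℕ
  | 0 => 2 ^ 10
  | k + 1 => 2 ^ (towerSeq k + 1)

/-- `V_n`: the union of `n` equally spaced open intervals of length `2^{-n}` centered at
`(2j+1)/(2n)`. -/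
noncomputable def towerV (n : ℕ) : Set ℝ :=
  ⋃ j ∈ Finset.range n,
    Set.Ioo ((2 * (j : ℝ) + 1) / (2 * (n : ℝ)) - (2 : ℝ) ^ (-(n : ℤ)) / 2)
      ((2 * (j : ℝ) + 1) / (2 * (n : ℝ)) + (2 : ℝ) ^ (-(n : ℤ)) / 2)

open scoped ENNReal

theorem subset_or_disjoint_iUnion {α : Type*} {ι : Sort*} {C : Set α} {U : ι → Set α}
    (h : ∀ i, C ⊆ U i ∨ Disjoint C (U i)) : C ⊆ ⋃ i, U i ∨ Disjoint C (⋃ i, U i) := by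
  by_cases hsub : ∃ i, C ⊆ U i
  · obtain ⟨i, hi⟩ := hsub
    exact .inl (hi.trans (subset_iUnion U i))
  · exact .inr (disjoint_iUnion_right.2 fun i => (h i).resolve_left fun hi => hsub ⟨i, hi⟩)

theorem measure_inter_eq_mul_of_ae_eq_biUnion {α ι : Type*} [MeasurableSpace α] {μ : Measure α}
    {V X : Set α} {C : ι → Set α} {t : Finset ι} {c : ℝ≥0∞} (hV : MeasurableSet V)
    (hC : ∀ a ∈ t, MeasurableSet (C a)) (hdisj : (t : Set ι).PairwiseDisjoint C)
    (hX : X =ᵐ[μ] ⋃ a ∈ t, C a) (hVC : ∀ a ∈ t, μ (V ∩ C a) = c * μ (C a)) :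
    μ (V ∩ X) = c * μ X := by
  rw [measure_congr ((Filter.EventuallyEq.refl _ V).inter hX), measure_congr hX, inter_iUnion₂,
    measure_biUnion_finset (hdisj.mono fun a => inter_subset_right) fun a ha => hV.inter (hC a ha),
    measure_biUnion_finset hdisj hC, Finset.mul_sum]
  exact Finset.sum_congr rfl hVC

section GridCell

variable {n : ℕ}

def gridCell (n a : ℕ) : Set ℝ := Ioo ((a : ℝ) / n) (((a : ℝ) + 1) / n)

theorem pairwise_disjoint_gridCell (n : ℕ) : Pairwise (Function.onFun Disjoint (gridCell n)) := by
  refine (pairwise_disjoint_on _).2 fun a b hab => Ioo_disjoint_Ioo.2 ?_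
  exact (min_le_left _ _).trans <| le_max_of_le_right <|
    div_le_div_of_nonneg_right (by exact_mod_cast hab) n.cast_nonneg

theorem volume_gridCell (hn : 0 < n) (a : ℕ) : volume (gridCell n a) = (n : ℝ≥0∞)⁻¹ := by
  rw [gridCell, Real.volume_Ioo, ← sub_div, add_sub_cancel_left, one_div,
    ENNReal.ofReal_inv_of_pos (by positivity), ENNReal.ofReal_natCast]

theorem gridCell_subset_Icc {a : ℕ} (ha : a < n) : gridCell n a ⊆ Icc 0 1 := by
  have hn : (0 : ℝ) < n := by exact_mod_cast (Nat.zero_le a).trans_lt ha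
  refine Ioo_subset_Icc_self.trans (Icc_subset_Icc (by positivity) ?_)
  rw [div_le_one hn]
  exact_mod_cast ha

theorem floor_lt_and_mem_gridCell (hn : 0 < n) {x : ℝ} (hx : x ∈ Icc 0 1)
    (hgrid : x ∉ range fun a : ℕ => (a : ℝ) / n) :
    ⌊x * n⌋₊ < n ∧ x ∈ gridCell n ⌊x * n⌋₊ := by
  have hn' : (0 : ℝ) < n := by exact_mod_cast hn
  have hxn : 0 ≤ x * n := mul_nonneg hx.1 hn'.le
  have hx1 : x < 1 :=
    hx.2.lt_of_ne fun h => hgrid ⟨n, show (n : ℝ) / n = x by rw [div_self hn'.ne', h]⟩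
  have hfloor : (⌊x * n⌋₊ : ℝ) < x * n :=
    (Nat.floor_le hxn).lt_of_ne fun h => hgrid ⟨_, (div_eq_iff hn'.ne').2 h⟩
  refine ⟨(Nat.floor_lt hxn).2 (mul_lt_of_lt_one_left hn' hx1), ?_, ?_⟩
  · exact (div_lt_iff₀ hn').2 hfloor
  · exact (lt_div_iff₀ hn').2 (Nat.lt_floor_add_one _)

open Classical in
theorem ae_eq_biUnion_gridCell (hn : 0 < n) {X : Set ℝ} (hX : X ⊆ Icc 0 1)
    (hcell : ∀ a < n, gridCell n a ⊆ X ∨ Disjoint (gridCell n a) X) :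
    X =ᵐ[volume] ⋃ a ∈ (Finset.range n).filter (gridCell n · ⊆ X), gridCell n a := by
  have hsub : (⋃ a ∈ (Finset.range n).filter (gridCell n · ⊆ X), gridCell n a) ⊆ X :=
    iUnion₂_subset fun a ha => (Finset.mem_filter.1 ha).2
  refine ae_eq_set.2 ⟨measure_mono_null ?_
    ((countable_range fun a : ℕ => (a : ℝ) / n).measure_zero volume),
    by rw [sdiff_eq_empty.2 hsub, measure_empty]⟩
  rintro x ⟨hxX, hxU⟩
  by_contra hgrid
  obtain ⟨ha, hxa⟩ := floor_lt_and_mem_gridCell hn (hX hxX) hgrid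
  have hsubX := (hcell _ ha).resolve_right (not_disjoint_iff.2 ⟨x, hxa, hxX⟩)
  exact hxU (mem_biUnion (Finset.mem_filter.2 ⟨Finset.mem_range.2 ha, hsubX⟩) hxa)

theorem gridCell_subset_or_disjoint_Ioo (a : ℕ) (p q : ℤ) :
    gridCell n a ⊆ Ioo ((p : ℝ) / n) ((q : ℝ) / n) ∨
      Disjoint (gridCell n a) (Ioo ((p : ℝ) / n) ((q : ℝ) / n)) := by
  have hn : (0 : ℝ) ≤ n := n.cast_nonneg
  by_cases h : p ≤ a ∧ (a : ℤ) + 1 ≤ q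
  · exact .inl (Ioo_subset_Ioo (div_le_div_of_nonneg_right (by exact_mod_cast h.1) hn)
      (div_le_div_of_nonneg_right (by exact_mod_cast h.2) hn))
  refine .inr (Ioo_disjoint_Ioo.2 ?_)
  rcases not_and_or.1 h with hp | hq
  · exact (min_le_left _ _).trans <| le_max_of_le_right <|
      div_le_div_of_nonneg_right (by exact_mod_cast (not_le.1 hp)) hn
  · exact (min_le_right _ _).trans <| le_max_of_le_left <|
      div_le_div_of_nonneg_right (by exact_mod_cast Int.lt_add_one_iff.1 (not_le.1 hq)) hn

end GridCell

section TowerV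

variable {m n : ℕ}

/-- The interval `J_{j,n}` of the paper. -/
def towerInterval (n j : ℕ) : Set ℝ :=
  Ioo ((2 * (j : ℝ) + 1) / (2 * (n : ℝ)) - (2 : ℝ) ^ (-(n : ℤ)) / 2)
    ((2 * (j : ℝ) + 1) / (2 * (n : ℝ)) + (2 : ℝ) ^ (-(n : ℤ)) / 2)

theorem towerV_eq_biUnion (n : ℕ) : towerV n = ⋃ j ∈ Finset.range n, towerInterval n j := rfl

theorem measurableSet_towerV (n : ℕ) : MeasurableSet (towerV n) :=
  Finset.measurableSet_biUnion _ fun _ _ => measurableSet_Ioo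

theorem volume_towerInterval (n j : ℕ) :
    volume (towerInterval n j) = ENNReal.ofReal ((2 : ℝ) ^ (-(n : ℤ))) := by
  rw [towerInterval, Real.volume_Ioo]
  ring_nf

theorem towerInterval_subset_gridCell (hn : 0 < n) (j : ℕ) :
    towerInterval n j ⊆ gridCell n j := by
  have hn' : (0 : ℝ) < n := by exact_mod_cast hn
  have hr : (2 : ℝ) ^ (-(n : ℤ)) / 2 ≤ 1 / (2 * n) := by
    have h2n : (n : ℝ) ≤ 2 ^ n := by exact_mod_cast Nat.lt_two_pow_self.le
    rw [zpow_neg, zpow_natCast, inv_eq_one_div, div_div,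
      div_le_div_iff₀ (by positivity) (by positivity)]
    linarith
  have hleft : (j : ℝ) / n = (2 * j + 1) / (2 * n) - 1 / (2 * n) := by field_simp; ring
  have hright : ((j : ℝ) + 1) / n = (2 * j + 1) / (2 * n) + 1 / (2 * n) := by field_simp; ring
  exact Ioo_subset_Ioo (by rw [hleft]; linarith) (by rw [hright]; linarith)

theorem volume_towerV (hn : 0 < n) :
    volume (towerV n) = n * ENNReal.ofReal ((2 : ℝ) ^ (-(n : ℤ))) := by
  have hdisj : ((Finset.range n : Set ℕ)).PairwiseDisjoint (towerInterval n) := fun i _ j _ hij =>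
    (pairwise_disjoint_gridCell n hij).mono (towerInterval_subset_gridCell hn i)
      (towerInterval_subset_gridCell hn j)
  rw [towerV_eq_biUnion, measure_biUnion_finset hdisj fun _ _ => measurableSet_Ioo]
  simp only [volume_towerInterval, Finset.sum_const, Finset.card_range, nsmul_eq_mul]

theorem towerV_inter_gridCell (hn : 0 < n) {a : ℕ} (ha : a < n) :
    towerV n ∩ gridCell n a = towerInterval n a := by
  refine Subset.antisymm ?_ fun x hx => ⟨mem_biUnion (Finset.mem_range.2 ha) hx,
    towerInterval_subset_gridCell hn a hx⟩
  rintro x ⟨hxV, hxa⟩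
  obtain ⟨j, -, hxj⟩ := mem_iUnion₂.1 hxV
  obtain rfl : j = a := by
    by_contra hja
    exact disjoint_left.1 (pairwise_disjoint_gridCell n hja)
      (towerInterval_subset_gridCell hn j hxj) hxa
  exact hxj

theorem volume_towerV_inter_gridCell (hn : 0 < n) {a : ℕ} (ha : a < n) :
    volume (towerV n ∩ gridCell n a) = volume (towerV n) * volume (gridCell n a) := by
  rw [towerV_inter_gridCell hn ha, volume_towerInterval, volume_towerV hn, volume_gridCell hn,
    mul_right_comm, ENNReal.mul_inv_cancel (by exact_mod_cast hn.ne') (ENNReal.natCast_ne_top n),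
    one_mul]

theorem towerInterval_eq_Ioo_div (hn : 0 < n) (hm : 2 * m ∣ n) (hm' : 2 ^ (m + 1) ∣ n)
    (j : ℕ) :
    ∃ p q : ℤ, towerInterval m j = Ioo ((p : ℝ) / n) ((q : ℝ) / n) := by
  obtain ⟨d, hd⟩ := hm
  obtain ⟨d', hd'⟩ := hm'
  have hn' : (n : ℝ) ≠ 0 := by positivity
  have hdR : (n : ℝ) = 2 * m * d := by exact_mod_cast hd
  have hd'R : (n : ℝ) = 2 ^ (m + 1) * d' := by exact_mod_cast hd'
  have hd0 : (d : ℝ) ≠ 0 := right_ne_zero_of_mul (hdR ▸ hn')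
  have hd'0 : (d' : ℝ) ≠ 0 := right_ne_zero_of_mul (hd'R ▸ hn')
  have hcenter : (2 * (j : ℝ) + 1) / (2 * m) = (2 * j + 1) * d / n := by
    rw [hdR, mul_div_mul_right _ _ hd0]
  have hradius : (2 : ℝ) ^ (-(m : ℤ)) / 2 = d' / n := by
    rw [hd'R, zpow_neg, zpow_natCast, pow_succ]
    field_simp
  refine ⟨(2 * j + 1) * d - d', (2 * j + 1) * d + d', ?_⟩
  rw [towerInterval, hcenter, hradius]
  push_cast
  rw [sub_div, add_div]

theorem gridCell_subset_or_disjoint_towerV (hn : 0 < n) (hm : 2 * m ∣ n)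
    (hm' : 2 ^ (m + 1) ∣ n) (a : ℕ) :
    gridCell n a ⊆ towerV m ∨ Disjoint (gridCell n a) (towerV m) := by
  rw [towerV_eq_biUnion]
  refine subset_or_disjoint_iUnion fun j => subset_or_disjoint_iUnion fun _ => ?_
  obtain ⟨p, q, hpq⟩ := towerInterval_eq_Ioo_div hn hm hm' j
  rw [hpq]
  exact gridCell_subset_or_disjoint_Ioo a p q

end TowerV

section TowerSeq

theorem towerSeq_pos (k : ℕ) : 0 < towerSeq k := by
  cases k <;> exact Nat.two_pow_pos _

theorem towerSeq_monotone : Monotone towerSeq :=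
  monotone_nat_of_le_succ fun k =>
    show towerSeq k ≤ 2 ^ (towerSeq k + 1) from
      (Nat.lt_two_pow_self.trans (Nat.pow_lt_pow_right one_lt_two (towerSeq k).lt_succ_self)).le

theorem two_pow_towerSeq_succ_dvd {i k : ℕ} (h : i < k) :
    2 ^ (towerSeq i + 1) ∣ towerSeq k := by
  obtain ⟨j, rfl⟩ := Nat.exists_eq_add_of_lt h
  exact pow_dvd_pow 2 (Nat.succ_le_succ (towerSeq_monotone (Nat.le_add_right i j)))

theorem two_mul_towerSeq_dvd {i k : ℕ} (h : i < k) : 2 * towerSeq i ∣ towerSeq k := by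
  refine dvd_trans ?_ (two_pow_towerSeq_succ_dvd h)
  obtain ⟨a, ha⟩ : ∃ a, towerSeq i = 2 ^ a := by cases i <;> exact ⟨_, rfl⟩
  rw [ha, ← pow_succ']
  exact pow_dvd_pow 2 (Nat.succ_le_succ Nat.lt_two_pow_self.le)

end TowerSeq

/-- with `X_k = [0,1] \ ⋃_{i<k} V_{n_i}` along the tower sequence,
`Leb(V_{n_k} ∩ X_k) = Leb(X_k) · Leb(V_{n_k})`. -/
theorem tower_independence (k : ℕ) :
    volume (towerV (towerSeq k) ∩ (Set.Icc (0 : ℝ) 1 \ ⋃ i ∈ Finset.range k, towerV (towerSeq i))) =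
      volume (Set.Icc (0 : ℝ) 1 \ ⋃ i ∈ Finset.range k, towerV (towerSeq i)) *
        volume (towerV (towerSeq k)) := by
  classical
  have hn := towerSeq_pos k
  have hU (a : ℕ) : gridCell (towerSeq k) a ⊆ ⋃ i ∈ Finset.range k, towerV (towerSeq i) ∨
      Disjoint (gridCell (towerSeq k) a) (⋃ i ∈ Finset.range k, towerV (towerSeq i)) :=
    subset_or_disjoint_iUnion fun i => subset_or_disjoint_iUnion fun hi =>
      gridCell_subset_or_disjoint_towerV hn (two_mul_towerSeq_dvd (Finset.mem_range.1 hi))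
        (two_pow_towerSeq_succ_dvd (Finset.mem_range.1 hi)) a
  have hX := ae_eq_biUnion_gridCell hn sdiff_subset fun a ha => (hU a).symm.imp
    (fun h => subset_sdiff.2 ⟨gridCell_subset_Icc ha, h⟩) disjoint_sdiff_right.mono_left
  rw [mul_comm]
  exact measure_inter_eq_mul_of_ae_eq_biUnion (measurableSet_towerV _)
    (fun _ _ => measurableSet_Ioo) ((pairwise_disjoint_gridCell _).set_pairwise _) hX
    fun a ha => volume_towerV_inter_gridCell hn (Finset.mem_range.1 (Finset.mem_filter.1 ha).1)
end
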